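/- arXiv:nlin/0407057 — 7 statements merged into one kernel-verified Lean document; each statement's English description precedes it below -/
import Mathlib

section
/- Let S : ℝ → sl(2,ℝ) be a smooth 1-periodic map with S(x) ≠ 0 for every x, and let V : ℝ → sl(2,ℝ) be a smooth 1-periodic map such that V(x)·S(x) = S(x)·V(x) for every x. Then there exists a smooth 1-periodic function f : ℝ → ℝ such that V(x) = f(x)·S(x) for all x. (The kernel of the Poisson tensor P₁ = [·,S] on the loop algebra of sl(2,ℝ) consists of the smooth multiples of S.) -/
/-- If `S` is a smooth, 1-periodic, nowhere-vanishing loop of traceless 2×2 real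
matrices and `V` is a smooth 1-periodic loop of traceless matrices commuting
pointwise with `S`, then `V` is a smooth 1-periodic scalar multiple of `S`. -/
theorem stmt_1 (S V : ℝ → Matrix (Fin 2) (Fin 2) ℝ)
    (hS_smooth : ∀ i j, ContDiff ℝ (⊤ : ℕ∞) fun x => S x i j)
    (hV_smooth : ∀ i j, ContDiff ℝ (⊤ : ℕ∞) fun x => V x i j)
    (hS_per : ∀ x, S (x + 1) = S x)
    (hV_per : ∀ x, V (x + 1) = V x)
    (hS_tr : ∀ x, Matrix.trace (S x) = 0)
    (hV_tr : ∀ x, Matrix.trace (V x) = 0)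
    (hS_ne : ∀ x, S x ≠ 0)
    (hcomm : ∀ x, V x * S x = S x * V x) :
    ∃ f : ℝ → ℝ, ContDiff ℝ (⊤ : ℕ∞) f ∧ (∀ x, f (x + 1) = f x) ∧
      ∀ x, V x = f x • S x := by
  set N : ℝ → ℝ := fun x => S x 0 0 ^ 2 + S x 0 1 ^ 2 + S x 1 0 ^ 2 + S x 1 1 ^ 2 with hNdef
  have hN : ∀ x, 0 < N x := by
    intro x
    rcases lt_or_ge 0 (N x) with h | h
    · exact h
    · exfalso
      apply hS_ne x
      simp only [hNdef] at h
      have sq0 : ∀ u : ℝ, u ^ 2 ≤ 0 → u = 0 := fun u hu =>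
        (pow_eq_zero_iff two_ne_zero).mp (le_antisymm hu (sq_nonneg u))
      have h00 : S x 0 0 = 0 := sq0 _ (by nlinarith [sq_nonneg (S x 0 1), sq_nonneg (S x 1 0), sq_nonneg (S x 1 1)])
      have h01 : S x 0 1 = 0 := sq0 _ (by nlinarith [sq_nonneg (S x 0 0), sq_nonneg (S x 1 0), sq_nonneg (S x 1 1)])
      have h10 : S x 1 0 = 0 := sq0 _ (by nlinarith [sq_nonneg (S x 0 0), sq_nonneg (S x 0 1), sq_nonneg (S x 1 1)])
      have h11 : S x 1 1 = 0 := sq0 _ (by nlinarith [sq_nonneg (S x 0 0), sq_nonneg (S x 0 1), sq_nonneg (S x 1 0)])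
      ext i j
      fin_cases i <;> fin_cases j <;> simpa
  set D : ℝ → ℝ := fun x => V x 0 0 * S x 0 0 + V x 0 1 * S x 0 1 + V x 1 0 * S x 1 0 + V x 1 1 * S x 1 1 with hDdef
  have hDc : ContDiff ℝ (⊤ : ℕ∞) D := by
    rw [hDdef]
    exact ((((hV_smooth 0 0).mul (hS_smooth 0 0)).add ((hV_smooth 0 1).mul (hS_smooth 0 1))).add
      ((hV_smooth 1 0).mul (hS_smooth 1 0))).add ((hV_smooth 1 1).mul (hS_smooth 1 1))
  have hNc : ContDiff ℝ (⊤ : ℕ∞) N := by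
    rw [hNdef]
    exact ((((hS_smooth 0 0).pow 2).add ((hS_smooth 0 1).pow 2)).add
      ((hS_smooth 1 0).pow 2)).add ((hS_smooth 1 1).pow 2)
  refine ⟨fun x => D x / N x, hDc.div hNc fun x => (hN x).ne', ?_, ?_⟩
  · intro x; simp [hDdef, hNdef, hS_per, hV_per]
  · intro x
    have hc01 := congrFun (congrFun (hcomm x) 0) 1
    have hc10 := congrFun (congrFun (hcomm x) 1) 0
    have hc00 := congrFun (congrFun (hcomm x) 0) 0
    simp [Matrix.mul_apply, Fin.sum_univ_two] at hc01 hc10 hc00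
    have htS := hS_tr x
    have htV := hV_tr x
    simp [Matrix.trace, Fin.sum_univ_two, Matrix.diag] at htS htV
    have ha : S x 1 1 = -S x 0 0 := by linarith
    have hv : V x 1 1 = -V x 0 0 := by linarith
    rw [ha, hv] at hc01 hc10
    have h1 : V x 0 0 * S x 0 1 = S x 0 0 * V x 0 1 := by linear_combination hc01 / 2
    have h2 : S x 0 0 * V x 1 0 = S x 1 0 * V x 0 0 := by linear_combination hc10 / 2
    have h3 : V x 0 1 * S x 1 0 = S x 0 1 * V x 1 0 := by linear_combination hc00
    have hNne := (hN x).ne'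
    have e00 : V x 0 0 = D x / N x * S x 0 0 := by
      rw [div_mul_eq_mul_div, eq_div_iff hNne]
      simp only [hNdef, hDdef]
      rw [ha, hv]
      linear_combination S x 0 1 * h1 - S x 1 0 * h2
    have e01 : V x 0 1 = D x / N x * S x 0 1 := by
      rw [div_mul_eq_mul_div, eq_div_iff hNne]
      simp only [hNdef, hDdef]
      rw [ha, hv]
      linear_combination (-2 * S x 0 0) * h1 + S x 1 0 * h3
    have e10 : V x 1 0 = D x / N x * S x 1 0 := by
      rw [div_mul_eq_mul_div, eq_div_iff hNne]
      simp only [hNdef, hDdef]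
      rw [ha, hv]
      linear_combination 2 * S x 0 0 * h2 - S x 0 1 * h3
    have e11 : V x 1 1 = D x / N x * S x 1 1 := by
      rw [ha, hv, e00]; ring
    ext i j
    fin_cases i <;> fin_cases j <;>
      simp only [Matrix.smul_apply, smul_eq_mul] <;>
      first
      | exact e00
      | exact e01
      | exact e10
      | exact e11
end

section
/- Let S : ℝ → sl(2,ℝ) be smooth with det(S(x)) = 0 for all x, let A ∈ sl(2,ℝ) be a constant matrix, and let μ : ℝ → ℝ be smooth. Define W(x) = (d/dx)(μ(x)·S(x)) + [μ(x)·S(x), A]. Then trace(S(x)·W(x)) = 0 for all x; equivalently, for each x the function t ↦ det(S(x) + t·W(x)) has derivative 0 at t = 0. (The distribution D = P₂(Ker P₁) is tangent to the symplectic leaf 𝒮 = {S : det S = 0, S ≠ 0} of P₁.) -/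
/-- Let `S : ℝ → sl(2,ℝ)` be smooth with `det (S x) = 0` for all `x`, let `A` be a
constant traceless matrix and `μ : ℝ → ℝ` smooth.  If
`W x = (d/dx)(μ x • S x) + [μ x • S x, A]`, then `trace (S x * W x) = 0` for all `x`;
equivalently, for each `x` the function `t ↦ det (S x + t • W x)` has derivative `0`
at `t = 0`.  (The distribution `D = P₂(Ker P₁)` is tangent to the symplectic leaf
`{S : det S = 0, S ≠ 0}` of `P₁`.) -/
theorem stmt_3 (S : ℝ → Matrix (Fin 2) (Fin 2) ℝ)
    (A : Matrix (Fin 2) (Fin 2) ℝ) (μ : ℝ → ℝ)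
    (hS_smooth : ∀ i j, ContDiff ℝ (⊤ : ℕ∞) fun x => S x i j)
    (hμ_smooth : ContDiff ℝ (⊤ : ℕ∞) μ)
    (hS_tr : ∀ x, Matrix.trace (S x) = 0)
    (hA_tr : Matrix.trace A = 0)
    (hS_det : ∀ x, Matrix.det (S x) = 0)
    (W : ℝ → Matrix (Fin 2) (Fin 2) ℝ)
    (hW : ∀ x i j, W x i j =
      deriv (fun y => μ y * S y i j) x
        + ((μ x • S x) * A - A * (μ x • S x)) i j) :
    (∀ x, Matrix.trace (S x * W x) = 0) ∧
      ∀ x, HasDerivAt (fun t : ℝ => Matrix.det (S x + t • W x)) 0 0 := by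
  have hSd : ∀ (i j) (x : ℝ), HasDerivAt (fun y => S y i j) (deriv (fun y => S y i j) x) x :=
    fun i j x => (((hS_smooth i j).differentiable (by simp)) x).hasDerivAt
  have h1 : ∀ x, Matrix.trace (S x * W x) = 0 := by
    intro x
    have htr_x : S x 0 0 + S x 1 1 = 0 := by
      have := hS_tr x; rw [Matrix.trace_fin_two] at this; linarith
    have hdet_x : S x 0 0 * S x 1 1 - S x 0 1 * S x 1 0 = 0 := by
      have := hS_det x; rw [Matrix.det_fin_two] at this; linarith
    have hFdet : HasDerivAt (fun y => S y 0 0 * S y 1 1 - S y 0 1 * S y 1 0)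
        (deriv (fun y => S y 0 0) x * S x 1 1 + S x 0 0 * deriv (fun y => S y 1 1) x
          - (deriv (fun y => S y 0 1) x * S x 1 0 + S x 0 1 * deriv (fun y => S y 1 0) x)) x :=
      ((hSd 0 0 x).mul (hSd 1 1 x)).sub ((hSd 0 1 x).mul (hSd 1 0 x))
    have hFdet0 : (fun y => S y 0 0 * S y 1 1 - S y 0 1 * S y 1 0) = fun _ => (0:ℝ) := by
      funext y; have := hS_det y; rw [Matrix.det_fin_two] at this; linarith
    rw [hFdet0] at hFdet
    have hdet' := hFdet.unique (hasDerivAt_const x 0)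
    have hFtr : HasDerivAt (fun y => S y 0 0 + S y 1 1)
        (deriv (fun y => S y 0 0) x + deriv (fun y => S y 1 1) x) x :=
      (hSd 0 0 x).add (hSd 1 1 x)
    have hFtr0 : (fun y => S y 0 0 + S y 1 1) = fun _ => (0:ℝ) := by
      funext y; have := hS_tr y; rw [Matrix.trace_fin_two] at this; linarith
    rw [hFtr0] at hFtr
    have htr' := hFtr.unique (hasDerivAt_const x 0)
    have hd : ∀ i j, deriv (fun y => μ y * S y i j) x
        = deriv μ x * S x i j + μ x * deriv (fun y => S y i j) x :=
      fun i j => deriv_mul ((hμ_smooth.differentiable (by simp)) x)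
        (((hS_smooth i j).differentiable (by simp)) x)
    simp only [Matrix.trace_fin_two, Matrix.mul_apply, Fin.sum_univ_two, hW, hd,
      Matrix.sub_apply, Matrix.smul_apply, smul_eq_mul]
    linear_combination (deriv μ x * (S x 0 0 + S x 1 1)) * htr_x
      - 2 * deriv μ x * hdet_x - μ x * hdet'
      + μ x * (S x 0 0 + S x 1 1) * htr'
  refine ⟨h1, fun x => ?_⟩
  have h2 := h1 x
  simp only [Matrix.trace_fin_two, Matrix.mul_apply, Fin.sum_univ_two] at h2
  have htr_x : S x 0 0 + S x 1 1 = 0 := by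
    have := hS_tr x; rw [Matrix.trace_fin_two] at this; linarith
  have hdet_x : S x 0 0 * S x 1 1 - S x 0 1 * S x 1 0 = 0 := by
    have := hS_det x; rw [Matrix.det_fin_two] at this; linarith
  have heq : (fun t : ℝ => Matrix.det (S x + t • W x))
      = fun t : ℝ => Matrix.det (W x) * t ^ 2 := by
    funext t
    simp only [Matrix.det_fin_two, Matrix.add_apply, Matrix.smul_apply, smul_eq_mul]
    linear_combination t * (W x 0 0 + W x 1 1) * htr_x - t * h2 + hdet_x
  rw [heq]
  have := ((hasDerivAt_pow 2 (0:ℝ)).const_mul (Matrix.det (W x)))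
  simpa using this
end

section
/- Let P, Q, R ∈ ℝ with R ≠ 0, and let α, α₂, μ, q : ℝ → ℝ be smooth 1-periodic functions. Set S(x) = [[0, q(x)],[0, 0]], A = [[P, Q],[R, −P]], V(x) = (d/dx)(μ(x)·S(x)) + [μ(x)·S(x), A], and α̃(x) = [[(α'(x)+2Pα(x))/(2R), α₂(x)],[α(x), −(α'(x)+2Pα(x))/(2R)]]. Then trace(α̃(x)·V(x)) = (d/dx)(α(x)·μ(x)·q(x)) for all x, and consequently ∫₀¹ trace(α̃(x)·V(x)) dx = 0. (The covector α̃ annihilates the distribution D at the point S(q).) -/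
/-- The covector `α̃` annihilates the distribution `D` at the point `S(q)`:
with `S x = [[0, q x],[0,0]]`, `A = [[P,Q],[R,−P]]`,
`V x = (d/dx)(μ x • S x) + [μ x • S x, A]` and
`α̃ x = [[(α' x + 2Pα x)/(2R), α₂ x],[α x, −(α' x + 2Pα x)/(2R)]]`,
one has `trace (α̃ x * V x) = (d/dx)(α x * μ x * q x)`, hence
`∫₀¹ trace (α̃ x * V x) dx = 0`. -/
theorem stmt_5 (P Q R : ℝ) (hR : R ≠ 0) (α α₂ μ q : ℝ → ℝ)
    (hα : ContDiff ℝ (⊤ : ℕ∞) α) (hα_per : ∀ x, α (x + 1) = α x)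
    (hα₂ : ContDiff ℝ (⊤ : ℕ∞) α₂) (hα₂_per : ∀ x, α₂ (x + 1) = α₂ x)
    (hμ : ContDiff ℝ (⊤ : ℕ∞) μ) (hμ_per : ∀ x, μ (x + 1) = μ x)
    (hq : ContDiff ℝ (⊤ : ℕ∞) q) (hq_per : ∀ x, q (x + 1) = q x)
    (S : ℝ → Matrix (Fin 2) (Fin 2) ℝ)
    (hS : ∀ x, S x = !![0, q x; 0, 0])
    (A : Matrix (Fin 2) (Fin 2) ℝ) (hA : A = !![P, Q; R, -P])
    (V : ℝ → Matrix (Fin 2) (Fin 2) ℝ)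
    (hV : ∀ x, V x = !![0, deriv (fun y => μ y * q y) x; 0, 0]
        + ((μ x • S x) * A - A * (μ x • S x)))
    (αt : ℝ → Matrix (Fin 2) (Fin 2) ℝ)
    (hαt : ∀ x, αt x = !![(deriv α x + 2 * P * α x) / (2 * R), α₂ x;
        α x, -((deriv α x + 2 * P * α x) / (2 * R))]) :
    (∀ x, Matrix.trace (αt x * V x) = deriv (fun y => α y * μ y * q y) x) ∧
      (∫ x in (0:ℝ)..1, Matrix.trace (αt x * V x)) = 0 := by
  have hf : ContDiff ℝ (⊤ : ℕ∞) (fun y => α y * μ y * q y) := (hα.mul hμ).mul hq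
  have hμq : ContDiff ℝ (⊤ : ℕ∞) (fun y => μ y * q y) := hμ.mul hq
  have hpt : ∀ x, Matrix.trace (αt x * V x) = deriv (fun y => α y * μ y * q y) x := by
    intro x
    have hd : deriv (fun y => α y * μ y * q y) x
        = deriv α x * (μ x * q x) + α x * deriv (fun y => μ y * q y) x := by
      have h1 : HasDerivAt α (deriv α x) x :=
        (hα.differentiable (by simp) x).hasDerivAt
      have h2 : HasDerivAt (fun y => μ y * q y) (deriv (fun y => μ y * q y) x) x :=
        (hμq.differentiable (by simp) x).hasDerivAt
      have h3 : HasDerivAt (fun y => α y * (μ y * q y))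
          (deriv α x * (μ x * q x) + α x * deriv (fun y => μ y * q y) x) x := h1.mul h2
      have := h3.deriv
      simp only [mul_assoc] at this ⊢
      exact this
    rw [hαt, hV, hS, hA, hd]
    simp [Matrix.trace_fin_two, Matrix.mul_fin_two, Matrix.smul_of, Matrix.smul_cons]
    field_simp
    ring
  refine ⟨hpt, ?_⟩
  rw [intervalIntegral.integral_congr (g := fun x => deriv (fun y => α y * μ y * q y) x)
      (fun x _ => hpt x)]
  rw [intervalIntegral.integral_deriv_eq_sub
      (fun x _ => hf.differentiable (by simp) x)]
  · have : α 1 * μ 1 * q 1 = α 0 * μ 0 * q 0 := by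
      have := hα_per 0; have := hμ_per 0; have := hq_per 0
      simp_all
    simp [this]
  · exact (((contDiff_infty_iff_deriv.mp (hf.of_le (by simp))).2.continuous).intervalIntegrable 0 1)
end

section
/- Let P, Q, R, λ ∈ ℝ with R ≠ 0, and let α, α₂, q : ℝ → ℝ be smooth functions. Define ṗ = (α'' + 2Pα')/(2R) + R·α₂ − Q·α − λ·α·q and q̇ = α₂' + (Q/R)(α' + 2Pα) − 2P·α₂ + λ·(q/R)(α' + 2Pα). Then q̇ − (ṗ' − 2P·ṗ)/R = −(1/(2R²))·α''' + (2(QR + P²)/R²)·α' + (λ/R)·(2q·α' + q'·α). In particular the result is independent of α₂. (The bi-Hamiltonian reduction of the Poisson pencil P₂ + λP₁ = ∂ₓ + [·,A] + λ[·,S] on the loop algebra of sl(2,ℝ), with A = [[P,Q],[R,−P]], to the transversal submanifold 𝒬 = {[[0,q],[0,0]]} is the pencil −(1/(2R²))∂ₓ³ + (2(QR+P²)/R²)∂ₓ + (λ/R)(2q∂ₓ + qₓ); for P = 0, Q = R = 1/2 this is the Camassa-Holm pair (2(2q∂ₓ+qₓ), 2(−∂ₓ³+∂ₓ)), and for P =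 Q = 0, R = 1 it is the Harry Dym pair (2q∂ₓ+qₓ, −½∂ₓ³).) -/
/-- Computation of the reduced Poisson pencil on the transversal submanifold `𝒬`:
projecting the tangent vector `(ṗ, q̇) = (P₂ + λP₁)α̃` along the distribution `E`
yields `−(1/(2R²))α''' + (2(QR+P²)/R²)α' + (λ/R)(2qα' + q'α)`,
independently of the arbitrary component `α₂`. -/
theorem stmt_6 (P Q R lam : ℝ) (hR : R ≠ 0) (α α₂ q : ℝ → ℝ)
    (hα : ContDiff ℝ (⊤ : ℕ∞) α) (hα₂ : ContDiff ℝ (⊤ : ℕ∞) α₂) (hq : ContDiff ℝ (⊤ : ℕ∞) q)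
    (pdot qdot : ℝ → ℝ)
    (hp : ∀ x, pdot x = (deriv (deriv α) x + 2 * P * deriv α x) / (2 * R)
        + R * α₂ x - Q * α x - lam * α x * q x)
    (hq' : ∀ x, qdot x = deriv α₂ x + (Q / R) * (deriv α x + 2 * P * α x)
        - 2 * P * α₂ x + lam * (q x / R) * (deriv α x + 2 * P * α x)) :
    ∀ x, qdot x - (deriv pdot x - 2 * P * pdot x) / R =
      -(1 / (2 * R ^ 2)) * deriv (deriv (deriv α)) x
        + (2 * (Q * R + P ^ 2) / R ^ 2) * deriv α x
        + (lam / R) * (2 * q x * deriv α x + deriv q x * α x) := by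
  have hα0 : ContDiff ℝ (⊤ : ℕ∞) α := hα.of_le (by simp)
  have hα₂0 : ContDiff ℝ (⊤ : ℕ∞) α₂ := hα₂.of_le (by simp)
  have hq0 : ContDiff ℝ (⊤ : ℕ∞) q := hq.of_le (by simp)
  have hα' : ContDiff ℝ (⊤ : ℕ∞) (deriv α) := (contDiff_infty_iff_deriv.mp hα0).2
  have hα'' : ContDiff ℝ (⊤ : ℕ∞) (deriv (deriv α)) := (contDiff_infty_iff_deriv.mp hα').2
  have Hα : ∀ x, HasDerivAt α (deriv α x) x :=
    fun x => (hα0.differentiable (by norm_num) x).hasDerivAt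
  have Hα' : ∀ x, HasDerivAt (deriv α) (deriv (deriv α) x) x :=
    fun x => (hα'.differentiable (by norm_num) x).hasDerivAt
  have Hα'' : ∀ x, HasDerivAt (deriv (deriv α)) (deriv (deriv (deriv α)) x) x :=
    fun x => (hα''.differentiable (by norm_num) x).hasDerivAt
  have Hα₂ : ∀ x, HasDerivAt α₂ (deriv α₂ x) x :=
    fun x => (hα₂0.differentiable (by norm_num) x).hasDerivAt
  have Hq : ∀ x, HasDerivAt q (deriv q x) x :=
    fun x => (hq0.differentiable (by norm_num) x).hasDerivAt
  have hpd : pdot = fun x => (deriv (deriv α) x + 2 * P * deriv α x) / (2 * R)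
        + R * α₂ x - Q * α x - lam * α x * q x := funext hp
  have key : ∀ x, HasDerivAt pdot
      ((deriv (deriv (deriv α)) x + 2 * P * deriv (deriv α) x) / (2 * R)
        + R * deriv α₂ x - Q * deriv α x
        - (lam * deriv α x * q x + lam * α x * deriv q x)) x := by
    intro x
    rw [hpd]
    exact (((((Hα'' x).add ((Hα' x).const_mul (2 * P))).div_const (2 * R)).add
      ((Hα₂ x).const_mul R)).sub ((Hα x).const_mul Q)).sub
      (((Hα x).const_mul lam).mul (Hq x))
  intro x
  rw [hq' x, (key x).deriv, hp x]
  field_simp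
  ring
end

section
/- Let u : ℝ → ℝ be smooth and set m = u − u''. Suppose g : ℝ → ℝ is smooth and satisfies g − g'' = −(1/4)(3u² − u'² − 2u·u''). Then 2(−g''' + g') = −2m·u' − m'·u. (The Camassa-Holm equation mₜ = −2muₓ − mₓu is Hamiltonian with respect to the second reduced Poisson tensor P₂ʳᵈ = 2(−∂ₓ³ + ∂ₓ), with Hamiltonian H₂ = −(1/4)∫(u³ + u·uₓ²)dx, whose variational derivative g with respect to m satisfies (1−∂ₓ²)g = δH₂/δu.) -/
/-- The Camassa-Holm equation `mₜ = −2muₓ − mₓu` is Hamiltonian with respect to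
the second reduced Poisson tensor `P₂ʳᵈ = 2(−∂ₓ³ + ∂ₓ)`: if `g` satisfies
`g − g'' = −(1/4)(3u² − u'² − 2uu'')` then `2(−g''' + g') = −2mu' − m'u`. -/
theorem stmt_10 (u m g : ℝ → ℝ) (hu : ContDiff ℝ (⊤ : ℕ∞) u) (hg_smooth : ContDiff ℝ (⊤ : ℕ∞) g)
    (hm : ∀ x, m x = u x - deriv (deriv u) x)
    (hg : ∀ x, g x - deriv (deriv g) x
        = -(1/4) * (3 * u x ^ 2 - (deriv u x) ^ 2 - 2 * u x * deriv (deriv u) x)) :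
    ∀ x, 2 * (-(deriv (deriv (deriv g)) x) + deriv g x)
      = -2 * m x * deriv u x - deriv m x * u x := by
  have hu0 : ContDiff ℝ ((⊤ : ℕ∞) : WithTop ℕ∞) u := hu.of_le (by simp)
  have hg0 : ContDiff ℝ ((⊤ : ℕ∞) : WithTop ℕ∞) g := hg_smooth.of_le (by simp)
  have hu1 : ContDiff ℝ ((⊤ : ℕ∞) : WithTop ℕ∞) (deriv u) :=
    (contDiff_infty_iff_deriv.mp hu0).2
  have hu2 : ContDiff ℝ ((⊤ : ℕ∞) : WithTop ℕ∞) (deriv (deriv u)) :=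
    (contDiff_infty_iff_deriv.mp hu1).2
  have hg1 : ContDiff ℝ ((⊤ : ℕ∞) : WithTop ℕ∞) (deriv g) :=
    (contDiff_infty_iff_deriv.mp hg0).2
  have hg2 : ContDiff ℝ ((⊤ : ℕ∞) : WithTop ℕ∞) (deriv (deriv g)) :=
    (contDiff_infty_iff_deriv.mp hg1).2
  have hone : (1 : WithTop ℕ∞) ≤ ((⊤ : ℕ∞) : WithTop ℕ∞) := by exact_mod_cast le_top
  have d1 : Differentiable ℝ u := hu0.differentiable (lt_of_lt_of_le zero_lt_one hone).ne'
  have d2 : Differentiable ℝ (deriv u) := hu1.differentiable (lt_of_lt_of_le zero_lt_one hone).ne'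
  have d3 : Differentiable ℝ (deriv (deriv u)) := hu2.differentiable (lt_of_lt_of_le zero_lt_one hone).ne'
  have e1 : Differentiable ℝ g := hg0.differentiable (lt_of_lt_of_le zero_lt_one hone).ne'
  have e3 : Differentiable ℝ (deriv (deriv g)) := hg2.differentiable (lt_of_lt_of_le zero_lt_one hone).ne'
  intro x
  -- derivative of m
  have hmfun : m = fun x => u x - deriv (deriv u) x := funext hm
  have hdm : deriv m x = deriv u x - deriv (deriv (deriv u)) x := by
    rw [hmfun, deriv_fun_sub (d1 x) (d3 x)]
  -- derivative of the hg identity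
  have hgfun : (fun x => g x - deriv (deriv g) x)
      = fun x => -(1/4) * (3 * u x ^ 2 - (deriv u x) ^ 2 - 2 * u x * deriv (deriv u) x) :=
    funext hg
  have hL : deriv (fun x => g x - deriv (deriv g) x) x
      = deriv g x - deriv (deriv (deriv g)) x := by
    rw [deriv_fun_sub (e1 x) (e3 x)]
  have hR : deriv (fun x => -(1/4) * (3 * u x ^ 2 - (deriv u x) ^ 2
        - 2 * u x * deriv (deriv u) x)) x
      = -(1/4) * (3 * (2 * u x * deriv u x) - 2 * deriv u x * deriv (deriv u) x
        - 2 * (deriv u x * deriv (deriv u) x + u x * deriv (deriv (deriv u)) x)) := by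
    have h2 : DifferentiableAt ℝ (fun x => 3 * u x ^ 2) x :=
      ((d1.pow 2).const_mul 3) x
    have h3 : DifferentiableAt ℝ (fun x => (deriv u x) ^ 2) x := (d2.pow 2) x
    have h4 : DifferentiableAt ℝ (fun x => 2 * u x * deriv (deriv u) x) x :=
      ((d1.const_mul 2).mul d3) x
    rw [deriv_const_mul _ ((h2.fun_sub h3).fun_sub h4), deriv_fun_sub (h2.fun_sub h3) h4,
      deriv_fun_sub h2 h3, deriv_const_mul _ ((d1.fun_pow 2) x),
      deriv_fun_pow (d1 x) 2, deriv_fun_pow (d2 x) 2,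
      deriv_fun_mul ((d1.const_mul 2) x) (d3 x), deriv_const_mul _ (d1 x)]
    ring
  have key : deriv g x - deriv (deriv (deriv g)) x
      = -(1/4) * (3 * (2 * u x * deriv u x) - 2 * deriv u x * deriv (deriv u) x
        - 2 * (deriv u x * deriv (deriv u) x + u x * deriv (deriv (deriv u)) x)) := by
    rw [← hL, ← hR, hgfun]
  rw [hm, hdm]
  nlinarith [key]
end

section
/- Let u : ℝ → ℝ be smooth with u(x) > 0 for all x, and set h = (5/16)·u^{−7/2}·u'² − (1/4)·u^{−5/2}·u''. Then 2u·h' + u'·h equals the third derivative of the function x ↦ u(x)^{−1/2}. (The Harry Dym equation uₜ = (u^{−1/2})ₓₓₓ is Hamiltonian with respect to the first reduced Poisson tensor P₁ʳᵈ = 2u∂ₓ + uₓ, with Hamiltonian H₁ = (1/8)∫u^{−5/2}uₓ² dx.) -/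
/-- The Harry Dym equation `uₜ = (u^(−1/2))ₓₓₓ` is Hamiltonian with respect to
the first reduced Poisson tensor `P₁ʳᵈ = 2u∂ₓ + uₓ`, with
`h = (5/16)u^(−7/2)u'² − (1/4)u^(−5/2)u''` the variational derivative of `H₁`. -/
theorem stmt_12 (u h : ℝ → ℝ) (hu : ContDiff ℝ (⊤ : ℕ∞) u) (hu_pos : ∀ x, 0 < u x)
    (hh : ∀ x, h x = (5/16) * u x ^ (-(7:ℝ)/2) * (deriv u x) ^ 2
        - (1/4) * u x ^ (-(5:ℝ)/2) * deriv (deriv u) x) :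
    ∀ x, 2 * u x * deriv h x + deriv u x * h x
      = deriv (deriv (deriv (fun y => u y ^ (-(1:ℝ)/2)))) x := by
  intro x
  have hud : Differentiable ℝ u := hu.differentiable (by simp)
  have hu0 : ContDiff ℝ (⊤ : ℕ∞) u := hu.of_le (by simp)
  have hu1 : ContDiff ℝ (⊤ : ℕ∞) (deriv u) := (contDiff_infty_iff_deriv.mp hu0).2
  have hu1d : Differentiable ℝ (deriv u) := hu1.differentiable (by simp)
  have hu2 : ContDiff ℝ (⊤ : ℕ∞) (deriv (deriv u)) := (contDiff_infty_iff_deriv.mp hu1).2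
  have hu2d : Differentiable ℝ (deriv (deriv u)) := hu2.differentiable (by simp)
  have hP : ∀ (p : ℝ) (y : ℝ),
      HasDerivAt (fun z => u z ^ p) (deriv u y * p * u y ^ (p - 1)) y := fun p y => by
    have := ((hud y).hasDerivAt).rpow_const (p := p) (Or.inl (hu_pos y).ne')
    simpa [mul_comm, mul_assoc, mul_left_comm] using this
  set a : ℝ := -(1:ℝ)/2 with ha
  -- first derivative of f
  have hf1 : deriv (fun z => u z ^ a) = fun y => deriv u y * a * u y ^ (a - 1) :=
    funext fun y => (hP a y).deriv
  -- second derivative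
  have hf2 : ∀ y, HasDerivAt (fun z => deriv u z * a * u z ^ (a - 1))
      (deriv (deriv u) y * a * u y ^ (a - 1)
        + deriv u y * a * (deriv u y * (a - 1) * u y ^ (a - 1 - 1))) y := fun y =>
    ((hu1d y).hasDerivAt.mul_const a).mul (hP (a - 1) y)
  have hf2' : deriv (deriv (fun z => u z ^ a)) = fun y =>
      deriv (deriv u) y * a * u y ^ (a - 1)
        + deriv u y * a * (deriv u y * (a - 1) * u y ^ (a - 1 - 1)) := by
    rw [hf1]; exact funext fun y => (hf2 y).deriv
  -- third derivative at x
  have hf3 : HasDerivAt (fun y =>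
      deriv (deriv u) y * a * u y ^ (a - 1)
        + deriv u y * a * (deriv u y * (a - 1) * u y ^ (a - 1 - 1)))
      (deriv (deriv (deriv u)) x * a * u x ^ (a - 1)
        + deriv (deriv u) x * a * (deriv u x * (a - 1) * u x ^ (a - 1 - 1))
        + (deriv (deriv u) x * a * (deriv u x * (a - 1) * u x ^ (a - 1 - 1))
          + deriv u x * a * (deriv (deriv u) x * (a - 1) * u x ^ (a - 1 - 1)
            + deriv u x * (a - 1) * (deriv u x * (a - 1 - 1) * u x ^ (a - 1 - 1 - 1))))) x := by
    exact (((hu2d x).hasDerivAt.mul_const a).mul (hP (a - 1) x)).add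
      (((hu1d x).hasDerivAt.mul_const a).mul
        (((hu1d x).hasDerivAt.mul_const (a - 1)).mul (hP (a - 1 - 1) x)))
  have hRHS : deriv (deriv (deriv (fun y => u y ^ a))) x =
      deriv (deriv (deriv u)) x * a * u x ^ (a - 1)
        + deriv (deriv u) x * a * (deriv u x * (a - 1) * u x ^ (a - 1 - 1))
        + (deriv (deriv u) x * a * (deriv u x * (a - 1) * u x ^ (a - 1 - 1))
          + deriv u x * a * (deriv (deriv u) x * (a - 1) * u x ^ (a - 1 - 1)
            + deriv u x * (a - 1) * (deriv u x * (a - 1 - 1) * u x ^ (a - 1 - 1 - 1)))) := by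
    rw [hf2']; exact hf3.deriv
  -- derivative of h
  have hhf : h = fun y => (5/16) * u y ^ (-(7:ℝ)/2) * (deriv u y) ^ 2
      - (1/4) * u y ^ (-(5:ℝ)/2) * deriv (deriv u) y := funext hh
  have hh' : HasDerivAt (fun y => (5/16) * u y ^ (-(7:ℝ)/2) * (deriv u y) ^ 2
      - (1/4) * u y ^ (-(5:ℝ)/2) * deriv (deriv u) y)
      (((5/16) * (deriv u x * (-(7:ℝ)/2) * u x ^ (-(7:ℝ)/2 - 1)) * (deriv u x) ^ 2
        + (5/16) * u x ^ (-(7:ℝ)/2) * (2 * deriv u x ^ 1 * deriv (deriv u) x))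
       - ((1/4) * (deriv u x * (-(5:ℝ)/2) * u x ^ (-(5:ℝ)/2 - 1)) * deriv (deriv u) x
        + (1/4) * u x ^ (-(5:ℝ)/2) * deriv (deriv (deriv u)) x)) x := by
    exact ((((hP (-(7:ℝ)/2) x).const_mul (5/16 : ℝ)).mul
        ((hu1d x).hasDerivAt.pow 2)).sub
      (((hP (-(5:ℝ)/2) x).const_mul (1/4 : ℝ)).mul (hu2d x).hasDerivAt))
  have hderivh : deriv h x =
      ((5/16) * (deriv u x * (-(7:ℝ)/2) * u x ^ (-(7:ℝ)/2 - 1)) * (deriv u x) ^ 2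
        + (5/16) * u x ^ (-(7:ℝ)/2) * (2 * deriv u x ^ 1 * deriv (deriv u) x))
       - ((1/4) * (deriv u x * (-(5:ℝ)/2) * u x ^ (-(5:ℝ)/2 - 1)) * deriv (deriv u) x
        + (1/4) * u x ^ (-(5:ℝ)/2) * deriv (deriv (deriv u)) x) := by
    rw [hhf]; exact hh'.deriv
  rw [hderivh, hh x, hRHS]
  -- now pure algebra in rpow
  have hpx : (0:ℝ) < u x := hu_pos x
  have key : ∀ n : ℕ, u x ^ (-(9:ℝ)/2 + n) = u x ^ (-(9:ℝ)/2) * u x ^ n := fun n => by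
    rw [Real.rpow_add hpx, Real.rpow_natCast]
  have e1 : u x ^ (a - 1) = u x ^ (-(9:ℝ)/2) * u x ^ (3:ℕ) := by
    rw [show a - 1 = -(9:ℝ)/2 + ((3:ℕ):ℝ) by rw [ha]; push_cast; norm_num]; exact key 3
  have e2 : u x ^ (a - 1 - 1) = u x ^ (-(9:ℝ)/2) * u x ^ (2:ℕ) := by
    rw [show a - 1 - 1 = -(9:ℝ)/2 + ((2:ℕ):ℝ) by rw [ha]; push_cast; norm_num]; exact key 2
  have e3 : u x ^ (a - 1 - 1 - 1) = u x ^ (-(9:ℝ)/2) * u x ^ (1:ℕ) := by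
    rw [show a - 1 - 1 - 1 = -(9:ℝ)/2 + ((1:ℕ):ℝ) by rw [ha]; push_cast; norm_num]; exact key 1
  have e4 : u x ^ (-(7:ℝ)/2) = u x ^ (-(9:ℝ)/2) * u x ^ (1:ℕ) := by
    rw [show (-(7:ℝ)/2) = -(9:ℝ)/2 + ((1:ℕ):ℝ) by push_cast; norm_num]; exact key 1
  have e5 : u x ^ (-(5:ℝ)/2) = u x ^ (-(9:ℝ)/2) * u x ^ (2:ℕ) := by
    rw [show (-(5:ℝ)/2) = -(9:ℝ)/2 + ((2:ℕ):ℝ) by push_cast; norm_num]; exact key 2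
  have e6 : u x ^ (-(7:ℝ)/2 - 1) = u x ^ (-(9:ℝ)/2) := by norm_num
  have e7 : u x ^ (-(5:ℝ)/2 - 1) = u x ^ (-(9:ℝ)/2) * u x ^ (1:ℕ) := by
    rw [show (-(5:ℝ)/2 - 1) = -(9:ℝ)/2 + ((1:ℕ):ℝ) by push_cast; norm_num]; exact key 1
  rw [e1, e2, e3, e4, e5, e6, e7, ha]
  ring
end

section
/- Let p, f, g : ℝ → ℝ be Schwartz functions and define (∂ₓ⁻¹h)(x) = (1/2)(∫_{−∞}^x h − ∫_x^{+∞} h). Then ∫_ℝ f·(∂ₓ⁻¹(p'·g) + p'·(∂ₓ⁻¹g)) dx = −∫_ℝ g·(∂ₓ⁻¹(p'·f) + p'·(∂ₓ⁻¹f)) dx. (The reduced Poisson tensor P₁ʳᵈ = −2(∂ₓ⁻¹pₓ + pₓ∂ₓ⁻¹) obtained in the A = 0 reduction on rapidly decreasing maps into sl(2,ℝ) is a skew-adjoint operator.) -/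
open MeasureTheory Set Filter Topology intervalIntegral

/-- The antiderivative operator `(∂ₓ⁻¹h)(x) = (1/2)(∫_{−∞}^x h − ∫_x^{+∞} h)`. -/
noncomputable def Dinv (h : ℝ → ℝ) (x : ℝ) : ℝ :=
  (1/2) * ((∫ y in Set.Iic x, h y) - ∫ y in Set.Ici x, h y)

lemma Dinv_eq {h : ℝ → ℝ} (hh : Integrable h) (x : ℝ) :
    Dinv h x = (∫ y in Iic x, h y) - (1/2) * ∫ y, h y := by
  have : (∫ y in Iic x, h y) + ∫ y in Ici x, h y = ∫ y, h y := by
    rw [integral_Ici_eq_integral_Ioi]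
    exact integral_Iic_add_Ioi hh.integrableOn hh.integrableOn
  unfold Dinv
  linarith

lemma Dinv_hasDerivAt {h : ℝ → ℝ} (hh : Integrable h) (hc : Continuous h) (x : ℝ) :
    HasDerivAt (Dinv h) (h x) x := by
  have key : ∀ u : ℝ, Dinv h u =
      (∫ t in (0:ℝ)..u, h t) + ((∫ y in Iic (0:ℝ), h y) - (1/2) * ∫ y, h y) := by
    intro u
    rw [Dinv_eq hh]
    have : (∫ t in (0:ℝ)..u, h t) = (∫ y in Iic u, h y) - ∫ y in Iic (0:ℝ), h y :=
      (intervalIntegral.integral_Iic_sub_Iic hh.integrableOn hh.integrableOn).symm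
    rw [this]; ring
  have hd : HasDerivAt (fun u => ∫ t in (0:ℝ)..u, h t) (h x) x :=
    intervalIntegral.integral_hasDerivAt_right hh.intervalIntegrable
      hc.stronglyMeasurable.stronglyMeasurableAtFilter hc.continuousAt
  have := hd.add_const ((∫ y in Iic (0:ℝ), h y) - (1/2) * ∫ y, h y)
  exact this.congr_of_eventuallyEq (Filter.Eventually.of_forall fun u => key u)

lemma Dinv_continuous {h : ℝ → ℝ} (hh : Integrable h) (hc : Continuous h) :
    Continuous (Dinv h) := by
  have : Differentiable ℝ (Dinv h) := fun x => (Dinv_hasDerivAt hh hc x).differentiableAt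
  exact this.continuous

lemma Dinv_bound {h : ℝ → ℝ} (hh : Integrable h) (x : ℝ) :
    ‖Dinv h x‖ ≤ ∫ y, ‖h y‖ := by
  have h1 : ‖∫ y in Iic x, h y‖ ≤ ∫ y, ‖h y‖ := by
    refine (MeasureTheory.norm_integral_le_integral_norm _).trans ?_
    exact setIntegral_le_integral hh.norm (Filter.Eventually.of_forall fun y => norm_nonneg _)
  have h2 : ‖∫ y in Ici x, h y‖ ≤ ∫ y, ‖h y‖ := by
    refine (MeasureTheory.norm_integral_le_integral_norm _).trans ?_
    exact setIntegral_le_integral hh.norm (Filter.Eventually.of_forall fun y => norm_nonneg _)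
  have h3 : ‖(∫ y in Iic x, h y) - ∫ y in Ici x, h y‖
      ≤ ‖∫ y in Iic x, h y‖ + ‖∫ y in Ici x, h y‖ := norm_sub_le _ _
  have h4 : ‖Dinv h x‖ = (1/2) * ‖(∫ y in Iic x, h y) - ∫ y in Ici x, h y‖ := by
    unfold Dinv
    rw [norm_mul]
    norm_num
  rw [h4]
  linarith

lemma Dinv_tendsto_atTop {h : ℝ → ℝ} (hh : Integrable h) :
    Tendsto (Dinv h) atTop (𝓝 ((1/2) * ∫ y, h y)) := by
  have hcov : AECover (volume : Measure ℝ) atTop (fun x : ℝ => Iic x) :=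
    aecover_Iic tendsto_id
  have h1 : Tendsto (fun x : ℝ => ∫ y in Iic x, h y) atTop (𝓝 (∫ y, h y)) :=
    hcov.integral_tendsto_of_countably_generated hh
  have := h1.sub_const ((1/2) * ∫ y, h y)
  have heq : (∫ y, h y) - (1/2) * ∫ y, h y = (1/2) * ∫ y, h y := by ring
  rw [heq] at this
  exact this.congr' (Filter.Eventually.of_forall fun x => (Dinv_eq hh x).symm)

lemma Dinv_tendsto_atBot {h : ℝ → ℝ} (hh : Integrable h) :
    Tendsto (Dinv h) atBot (𝓝 (-((1/2) * ∫ y, h y))) := by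
  have hcov : AECover (volume : Measure ℝ) atBot (fun x : ℝ => Ici x) :=
    aecover_Ici tendsto_id
  have h1 : Tendsto (fun x : ℝ => ∫ y in Ici x, h y) atBot (𝓝 (∫ y, h y)) :=
    hcov.integral_tendsto_of_countably_generated hh
  have h2 : Tendsto (fun x : ℝ => ∫ y in Iic x, h y) atBot (𝓝 ((∫ y, h y) - ∫ y, h y)) := by
    have heq : ∀ x : ℝ, (∫ y in Iic x, h y) = (∫ y, h y) - ∫ y in Ici x, h y := by
      intro x
      have : (∫ y in Iic x, h y) + ∫ y in Ici x, h y = ∫ y, h y := by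
        rw [integral_Ici_eq_integral_Ioi]
        exact integral_Iic_add_Ioi hh.integrableOn hh.integrableOn
      linarith
    exact (tendsto_const_nhds.sub h1).congr fun x => (heq x).symm
  rw [sub_self] at h2
  have := h2.sub_const ((1/2) * ∫ y, h y)
  rw [zero_sub] at this
  exact this.congr' (Filter.Eventually.of_forall fun x => (Dinv_eq hh x).symm)

lemma Dinv_mul_integrable {f h : ℝ → ℝ} (hf : Integrable f)
    (hh : Integrable h) (hhc : Continuous h) :
    Integrable (fun x => f x * Dinv h x) := by
  have : Integrable (fun x => Dinv h x * f x) :=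
    hf.bdd_mul (Dinv_continuous hh hhc).aestronglyMeasurable (Filter.Eventually.of_forall (Dinv_bound hh))
  exact this.congr (Filter.Eventually.of_forall fun x => mul_comm _ _)

lemma Dinv_skew {f h : ℝ → ℝ} (hf : Integrable f) (hfc : Continuous f)
    (hh : Integrable h) (hhc : Continuous h) :
    ∫ x, f x * Dinv h x = -∫ x, h x * Dinv f x := by
  have hderiv : ∀ x, HasDerivAt (fun u => Dinv f u * Dinv h u)
      (f x * Dinv h x + Dinv f x * h x) x :=
    fun x => (Dinv_hasDerivAt hf hfc x).mul (Dinv_hasDerivAt hh hhc x)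
  have hint1 : Integrable (fun x => f x * Dinv h x) := Dinv_mul_integrable hf hh hhc
  have hint2 : Integrable (fun x => Dinv f x * h x) :=
    hh.bdd_mul (Dinv_continuous hf hfc).aestronglyMeasurable (Filter.Eventually.of_forall (Dinv_bound hf))
  have hint : Integrable (fun x => f x * Dinv h x + Dinv f x * h x) := hint1.add hint2
  have hbot : Tendsto (fun u => Dinv f u * Dinv h u) atBot
      (𝓝 ((-((1/2) * ∫ y, f y)) * (-((1/2) * ∫ y, h y)))) :=
    (Dinv_tendsto_atBot hf).mul (Dinv_tendsto_atBot hh)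
  have htop : Tendsto (fun u => Dinv f u * Dinv h u) atTop
      (𝓝 (((1/2) * ∫ y, f y) * ((1/2) * ∫ y, h y))) :=
    (Dinv_tendsto_atTop hf).mul (Dinv_tendsto_atTop hh)
  have hzero := integral_of_hasDerivAt_of_tendsto hderiv hint hbot htop
  rw [integral_add hint1 hint2] at hzero
  have : (∫ x, Dinv f x * h x) = ∫ x, h x * Dinv f x :=
    integral_congr_ae (Filter.Eventually.of_forall fun x => mul_comm _ _)
  rw [this] at hzero
  linarith

/-- The reduced Poisson tensor `P₁ʳᵈ = −2(∂ₓ⁻¹pₓ + pₓ∂ₓ⁻¹)` of the `A = 0`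
reduction is skew-adjoint with respect to the `L²` pairing on Schwartz
functions. -/
theorem stmt_15 (p f g : SchwartzMap ℝ ℝ) :
    (∫ x : ℝ, f x * (Dinv (fun y => deriv p y * g y) x
        + deriv p x * Dinv (fun y => g y) x))
      = -∫ x : ℝ, g x * (Dinv (fun y => deriv p y * f y) x
        + deriv p x * Dinv (fun y => f y) x) := by
  have hpc : Continuous (fun x => deriv p x) := by
    have := (SchwartzMap.derivCLM ℝ ℝ p).continuous
    exact this
  obtain ⟨C, hC⟩ : ∃ C, ∀ x, ‖deriv p x‖ ≤ C := by
    refine ⟨‖SchwartzMap.toBoundedContinuousFunction (SchwartzMap.derivCLM ℝ ℝ p)‖, fun x => ?_⟩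
    have := (SchwartzMap.toBoundedContinuousFunction
      (SchwartzMap.derivCLM ℝ ℝ p)).norm_coe_le_norm x
    simpa [SchwartzMap.derivCLM_apply] using this
  have hfint : Integrable (fun x => f x) := f.integrable
  have hgint : Integrable (fun x => g x) := g.integrable
  have hfc : Continuous (fun x => f x) := f.continuous
  have hgc : Continuous (fun x => g x) := g.continuous
  have hpg : Integrable (fun x => deriv p x * g x) :=
    hgint.bdd_mul hpc.aestronglyMeasurable (Filter.Eventually.of_forall hC)
  have hpf : Integrable (fun x => deriv p x * f x) :=
    hfint.bdd_mul hpc.aestronglyMeasurable (Filter.Eventually.of_forall hC)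
  have hpgc : Continuous (fun x => deriv p x * g x) := hpc.mul hgc
  have hpfc : Continuous (fun x => deriv p x * f x) := hpc.mul hfc
  -- integrability of the four summands
  have i1 : Integrable (fun x => f x * Dinv (fun y => deriv p y * g y) x) :=
    Dinv_mul_integrable hfint hpg hpgc
  have i2 : Integrable (fun x => f x * (deriv p x * Dinv (fun y => g y) x)) := by
    have : Integrable (fun x => (deriv p x * f x) * Dinv (fun y => g y) x) :=
      Dinv_mul_integrable hpf hgint hgc
    exact this.congr (Filter.Eventually.of_forall fun x => by ring)
  have i3 : Integrable (fun x => g x * Dinv (fun y => deriv p y * f y) x) :=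
    Dinv_mul_integrable hgint hpf hpfc
  have i4 : Integrable (fun x => g x * (deriv p x * Dinv (fun y => f y) x)) := by
    have : Integrable (fun x => (deriv p x * g x) * Dinv (fun y => f y) x) :=
      Dinv_mul_integrable hpg hfint hfc
    exact this.congr (Filter.Eventually.of_forall fun x => by ring)
  have split1 : (∫ x : ℝ, f x * (Dinv (fun y => deriv p y * g y) x
        + deriv p x * Dinv (fun y => g y) x))
      = (∫ x : ℝ, f x * Dinv (fun y => deriv p y * g y) x)
        + ∫ x : ℝ, f x * (deriv p x * Dinv (fun y => g y) x) := by
    rw [← integral_add i1 i2]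
    exact integral_congr_ae (Filter.Eventually.of_forall fun x => by ring)
  have split2 : (∫ x : ℝ, g x * (Dinv (fun y => deriv p y * f y) x
        + deriv p x * Dinv (fun y => f y) x))
      = (∫ x : ℝ, g x * Dinv (fun y => deriv p y * f y) x)
        + ∫ x : ℝ, g x * (deriv p x * Dinv (fun y => f y) x) := by
    rw [← integral_add i3 i4]
    exact integral_congr_ae (Filter.Eventually.of_forall fun x => by ring)
  rw [split1, split2]
  have e1 : (∫ x : ℝ, f x * Dinv (fun y => deriv p y * g y) x)
      = -∫ x : ℝ, (deriv p x * g x) * Dinv (fun y => f y) x :=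
    Dinv_skew hfint hfc hpg hpgc
  have e2 : (∫ x : ℝ, f x * (deriv p x * Dinv (fun y => g y) x))
      = -∫ x : ℝ, g x * Dinv (fun y => deriv p y * f y) x := by
    have := Dinv_skew hpf hpfc hgint hgc
    rw [← this]
    exact integral_congr_ae (Filter.Eventually.of_forall fun x => by ring)
  have e3 : (∫ x : ℝ, (deriv p x * g x) * Dinv (fun y => f y) x)
      = ∫ x : ℝ, g x * (deriv p x * Dinv (fun y => f y) x) :=
    integral_congr_ae (Filter.Eventually.of_forall fun x => by ring)
  rw [e1, e2, e3]
  ring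
end
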